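/- arXiv:2006.13914 — 2 statements merged into one kernel-verified Lean document; each statement's English description precedes it below -/
import Mathlib

section
/- Let H⁻ₓ, H⁻ᵥ and H⁺ₓ, H⁺ᵥ be real linear maps from ℝ^n and ℝ respectively to ℝ^m, and let h⁻, h⁺ ∈ ℝ^m. For r ∈ ℝ, r ≠ 0, and y ∈ ℝ, define the dynamic maximal admissible set O(r, y) ⊆ ℝ^n × ℝ by: if y ≤ r and r > 0, O(r,y) = {(x,v) : H⁻ₓx + H⁻ᵥv ≤ r·h⁻}; if y > r and r > 0, O(r,y) = {(x,v) : H⁺ₓx + H⁺ᵥv ≥ r·h⁺}; if y ≤ r and r < 0, O(r,y) = {(x,v) : H⁺ₓx + H⁺ᵥv ≤ r·h⁺}; if y > r and r < 0, O(r,y) = {(x,v) : H⁻ₓx + H⁻ᵥv ≥ r·h⁻}. Then for every α > 0, O(αr, αy) = α·O(r, y), where α·S = {(αx, αv) : (x,v) ∈ S}. (The homogeneity of the dynamic maximal admissible set of Table I, the key step in the proof of Theorem 2.) -/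
/-!
Multiplying by `α > 0` changes neither the sign of `r` nor the order of `y` and `r`, so both
sides fall in the same case of Table I. Each case is the preimage of a half-line `Iic (r • h)` or
`Ici (r • h)` under the linear map `(x, v) ↦ Hₓ x + Hᵥ v`; scaling by `α` maps that half-line onto
the one at `(α * r) • h`, and commutes with preimages under linear maps.
-/

open Pointwise Set

section

variable {K F : Type*} [GroupWithZero K] [Preorder K] [Preorder F] [MulAction K F]
  [PosSMulMono K F] [PosSMulReflectLE K F] {a : K}

lemma smul_Iic_of_pos (ha : 0 < a) (b : F) : a • Iic b = Iic (a • b) :=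
  (OrderIso.smulRight ha).image_Iic b

lemma smul_Ici_of_pos (ha : 0 < a) (b : F) : a • Ici b = Ici (a • b) :=
  (OrderIso.smulRight ha).image_Ici b

end

section

variable {K E E' F : Type*} [DivisionRing K] [Preorder K]
  [AddCommGroup E] [Module K E] [AddCommGroup E'] [Module K E']
  [AddCommGroup F] [Preorder F] [Module K F] [PosSMulMono K F] [PosSMulReflectLE K F]
  (A : E →ₗ[K] F) (B : E' →ₗ[K] F) (r : K) (c : F) {a : K}

lemma setOf_add_le_mul_smul_eq_smul (ha : 0 < a) :
    {z : E × E' | A z.1 + B z.2 ≤ (a * r) • c} = a • {z : E × E' | A z.1 + B z.2 ≤ r • c} := by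
  change (A.coprod B) ⁻¹' Iic ((a * r) • c) = a • (A.coprod B) ⁻¹' Iic (r • c)
  rw [mul_smul, ← smul_Iic_of_pos ha, (IsUnit.mk0 a ha.ne').preimage_smul_set]

lemma setOf_mul_smul_le_add_eq_smul (ha : 0 < a) :
    {z : E × E' | (a * r) • c ≤ A z.1 + B z.2} = a • {z : E × E' | r • c ≤ A z.1 + B z.2} := by
  change (A.coprod B) ⁻¹' Ici ((a * r) • c) = a • (A.coprod B) ⁻¹' Ici (r • c)
  rw [mul_smul, ← smul_Ici_of_pos ha, (IsUnit.mk0 a ha.ne').preimage_smul_set]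

end

/-- Homogeneity of the dynamic maximal admissible set of Table I: for every `α > 0` and
`r ≠ 0`, `O(αr, αy) = α • O(r, y)`, where `O(r, y)` is given by the four cases of Table I
depending on the sign of `r` and on whether `y ≤ r` or `y > r`. -/
theorem stmt_14 {n m : ℕ}
    (Hxm Hxp : (Fin n → ℝ) →ₗ[ℝ] (Fin m → ℝ))
    (Hvm Hvp : ℝ →ₗ[ℝ] (Fin m → ℝ))
    (hminus hplus : Fin m → ℝ)
    (O : ℝ → ℝ → Set ((Fin n → ℝ) × ℝ))
    (hO : ∀ r y : ℝ, r ≠ 0 → O r y =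
      if 0 < r then
        (if y ≤ r then {xv : (Fin n → ℝ) × ℝ | Hxm xv.1 + Hvm xv.2 ≤ r • hminus}
         else {xv : (Fin n → ℝ) × ℝ | r • hplus ≤ Hxp xv.1 + Hvp xv.2})
      else
        (if y ≤ r then {xv : (Fin n → ℝ) × ℝ | Hxp xv.1 + Hvp xv.2 ≤ r • hplus}
         else {xv : (Fin n → ℝ) × ℝ | r • hminus ≤ Hxm xv.1 + Hvm xv.2})) :
    ∀ r y : ℝ, r ≠ 0 → ∀ α : ℝ, 0 < α → O (α * r) (α * y) = α • O r y := by
  intro r y hr α hα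
  rw [hO _ _ (mul_ne_zero hα.ne' hr), hO _ _ hr]
  simp only [mul_pos_iff_of_pos_left hα, mul_le_mul_iff_right₀ hα]
  split_ifs
  · exact setOf_add_le_mul_smul_eq_smul _ _ _ _ hα
  · exact setOf_mul_smul_le_add_eq_smul _ _ _ _ hα
  · exact setOf_add_le_mul_smul_eq_smul _ _ _ _ hα
  · exact setOf_mul_smul_le_add_eq_smul _ _ _ _ hα
end

section
/- Let A be a real n×n matrix, b ∈ ℝ^n, and c ∈ ℝ^n a row output map (y_tr = cᵀx). Let O(r, y) ⊆ ℝ^n × ℝ be the dynamic maximal admissible set defined, for r ≠ 0, by the four cases of Table I: O(r,y) = {(x,v) : H⁻ₓx + H⁻ᵥv ≤ r·h⁻} if y ≤ r, r > 0; {(x,v) : H⁺ₓx + H⁺ᵥv ≥ r·h⁺} if y > r, r > 0; {(x,v) : H⁺ₓx + H⁺ᵥv ≤ r·h⁺} if y ≤ r, r < 0; {(x,v) : H⁻ₓx + H⁻ᵥv ≥ r·h⁻} if y > r, r < 0, where H⁻ₓ, H⁻ᵥ, H⁺ₓ, H⁺ᵥ are fixed linear maps into ℝ^m and h⁻, h⁺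 ∈ ℝ^m. Given a reference sequence r : ℕ → ℝ with r(t) ≠ 0 for all t and initial conditions (x₀, v₀), define the governed trajectory by x(0) = x₀, v(−1) = v₀, κ(t) = sup({0} ∪ {κ ∈ [0,1] : (x(t), v(t−1) + κ(r(t) − v(t−1))) ∈ O(r(t), cᵀx(t))}), v(t) = v(t−1) + κ(t)(r(t) − v(t−1)), and x(t+1) = A x(t) + b v(t). Then for every α > 0, the governed trajectory corresponding to the scaled data (α·r, α·x₀, α·v₀) satisfies x_α(t) = α x(t), v_α(t) = α v(t), and κ_α(t) = κ(t) for all t; in particular the governed tracking output satisfies y_tr(t, αr, α(x₀,v₀)) = α · y_tr(t, r, (x₀,v₀)). (Theorem 2 of the paper: the RG-DC governed closed-loop system satisfies the homogeneity condition.) -/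
/-!
Every ingredient of the governor is positively homogeneous of degree one. Each set of Table I
is a half-space `F p ≤ ρ • h` (or `≥`) with `F` linear, selected by the sign of `ρ` and the
comparison `y ≤ ρ`; replacing `(p, ρ, y)` by `α • (p, ρ, y)` with `α > 0` changes neither the
selection nor the membership. Hence the feasible gains at time `t` are the same for the scaled
and the unscaled data, so are their suprema `κ(t)`, and since the updates of `v` and `x` are
linear, induction on `t` propagates `x_α = α x`, `v_α = α v`.
-/

open Matrix

/-- The RG-DC governed trajectory: `x 0 = x₀`; at each time `t`, with previous governed
reference `v(t−1)` (equal to `v₀` when `t = 0`), the governor picks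
`κ(t) = sup ({0} ∪ {κ ∈ [0,1] : (x(t), v(t−1) + κ(r(t) − v(t−1))) ∈ O(r(t), cᵀx(t))})`,
sets `v(t) = v(t−1) + κ(t)(r(t) − v(t−1))`, and the state evolves by
`x(t+1) = A x(t) + b v(t)`. -/
def IsRGDCTrajectory {n : ℕ} (A : Matrix (Fin n) (Fin n) ℝ) (b c : Fin n → ℝ)
    (O : ℝ → ℝ → Set ((Fin n → ℝ) × ℝ)) (r : ℕ → ℝ) (x₀ : Fin n → ℝ) (v₀ : ℝ)
    (x : ℕ → Fin n → ℝ) (v : ℕ → ℝ) (κ : ℕ → ℝ) : Prop :=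
  x 0 = x₀ ∧
  (∀ t : ℕ, κ t = sSup ({0} ∪ {k : ℝ | k ∈ Set.Icc (0 : ℝ) 1 ∧
      (x t, (if t = 0 then v₀ else v (t - 1))
        + k * (r t - (if t = 0 then v₀ else v (t - 1)))) ∈ O (r t) (c ⬝ᵥ x t)})) ∧
  (∀ t : ℕ, v t = (if t = 0 then v₀ else v (t - 1))
      + κ t * (r t - (if t = 0 then v₀ else v (t - 1)))) ∧
  (∀ t : ℕ, x (t + 1) = A.mulVec (x t) + v t • b)

section HalfSpace

variable {M N : Type*} [AddCommGroup M] [Module ℝ M] [AddCommGroup N] [PartialOrder N]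
  [Module ℝ N] [PosSMulMono ℝ N] [PosSMulReflectLE ℝ N]

theorem LinearMap.map_smul_le_mul_smul_iff (f : M →ₗ[ℝ] N) (h : N) {α : ℝ} (hα : 0 < α)
    (ρ : ℝ) (p : M) : f (α • p) ≤ (α * ρ) • h ↔ f p ≤ ρ • h := by
  rw [map_smul, mul_smul]
  exact smul_le_smul_iff_of_pos_left hα

theorem LinearMap.mul_smul_le_map_smul_iff (f : M →ₗ[ℝ] N) (h : N) {α : ℝ} (hα : 0 < α)
    (ρ : ℝ) (p : M) : (α * ρ) • h ≤ f (α • p) ↔ ρ • h ≤ f p := by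
  rw [map_smul, mul_smul]
  exact smul_le_smul_iff_of_pos_left hα

end HalfSpace

def IsHomogeneousFamily {E : Type*} [SMul ℝ E] (O : ℝ → ℝ → Set E) : Prop :=
  ∀ ⦃α ρ : ℝ⦄, 0 < α → ρ ≠ 0 → ∀ (y : ℝ) (p : E), α • p ∈ O (α * ρ) (α * y) ↔ p ∈ O ρ y

theorem isHomogeneousFamily_tableI {n m : ℕ}
    {Hxm Hxp : (Fin n → ℝ) →ₗ[ℝ] (Fin m → ℝ)} {Hvm Hvp : ℝ →ₗ[ℝ] (Fin m → ℝ)}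
    {hminus hplus : Fin m → ℝ} {O : ℝ → ℝ → Set ((Fin n → ℝ) × ℝ)}
    (hO : ∀ ρ y : ℝ, ρ ≠ 0 → O ρ y =
      if 0 < ρ then
        (if y ≤ ρ then {xv : (Fin n → ℝ) × ℝ | Hxm xv.1 + Hvm xv.2 ≤ ρ • hminus}
         else {xv : (Fin n → ℝ) × ℝ | ρ • hplus ≤ Hxp xv.1 + Hvp xv.2})
      else
        (if y ≤ ρ then {xv : (Fin n → ℝ) × ℝ | Hxp xv.1 + Hvp xv.2 ≤ ρ • hplus}
         else {xv : (Fin n → ℝ) × ℝ | ρ • hminus ≤ Hxm xv.1 + Hvm xv.2})) :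
    IsHomogeneousFamily O := by
  intro α ρ hα hρ y p
  have hpos : 0 < α * ρ ↔ 0 < ρ := mul_pos_iff_of_pos_left hα
  have hle : α * y ≤ α * ρ ↔ y ≤ ρ := mul_le_mul_iff_right₀ hα
  rw [hO _ _ (mul_ne_zero hα.ne' hρ), hO _ _ hρ]
  simp only [hpos, hle]
  split_ifs
  · exact (Hxm.coprod Hvm).map_smul_le_mul_smul_iff hminus hα ρ p
  · exact (Hxp.coprod Hvp).mul_smul_le_map_smul_iff hplus hα ρ p
  · exact (Hxp.coprod Hvp).map_smul_le_mul_smul_iff hplus hα ρ p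
  · exact (Hxm.coprod Hvm).mul_smul_le_map_smul_iff hminus hα ρ p

/-- The governed reference `v (t - 1)` in force before time `t`, with `v (-1) = v₀`. -/
def prevRef (v₀ : ℝ) (v : ℕ → ℝ) (t : ℕ) : ℝ :=
  if t = 0 then v₀ else v (t - 1)

@[simp]
theorem prevRef_zero (v₀ : ℝ) (v : ℕ → ℝ) : prevRef v₀ v 0 = v₀ := rfl

@[simp]
theorem prevRef_succ (v₀ : ℝ) (v : ℕ → ℝ) (t : ℕ) : prevRef v₀ v (t + 1) = v t := rfl

def feasibleGains {n : ℕ} (c : Fin n → ℝ) (O : ℝ → ℝ → Set ((Fin n → ℝ) × ℝ)) (ρ : ℝ)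
    (x : Fin n → ℝ) (w : ℝ) : Set ℝ :=
  {k : ℝ | k ∈ Set.Icc (0 : ℝ) 1 ∧ (x, w + k * (ρ - w)) ∈ O ρ (c ⬝ᵥ x)}

theorem feasibleGains_smul {n : ℕ} {c : Fin n → ℝ} {O : ℝ → ℝ → Set ((Fin n → ℝ) × ℝ)}
    (hO : IsHomogeneousFamily O) {α ρ : ℝ} (hα : 0 < α) (hρ : ρ ≠ 0) (x : Fin n → ℝ) (w : ℝ) :
    feasibleGains c O (α * ρ) (α • x) (α * w) = feasibleGains c O ρ x w := by
  ext k
  have hscale : (α • x, α * w + k * (α * ρ - α * w)) = α • (x, w + k * (ρ - w)) := by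
    ext
    · rfl
    · simp only [Prod.smul_snd, smul_eq_mul]
      ring
  simp only [feasibleGains, Set.mem_ofPred_eq, dotProduct_smul, smul_eq_mul, hscale, hO hα hρ]

namespace IsRGDCTrajectory

variable {n : ℕ} {A : Matrix (Fin n) (Fin n) ℝ} {b c : Fin n → ℝ}
  {O : ℝ → ℝ → Set ((Fin n → ℝ) × ℝ)} {r : ℕ → ℝ} {x₀ : Fin n → ℝ} {v₀ : ℝ}
  {x : ℕ → Fin n → ℝ} {v : ℕ → ℝ} {κ : ℕ → ℝ}

theorem state_zero (h : IsRGDCTrajectory A b c O r x₀ v₀ x v κ) : x 0 = x₀ :=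
  h.1

theorem state_succ (h : IsRGDCTrajectory A b c O r x₀ v₀ x v κ) (t : ℕ) :
    x (t + 1) = A *ᵥ x t + v t • b :=
  h.2.2.2 t

theorem gain_eq (h : IsRGDCTrajectory A b c O r x₀ v₀ x v κ) (t : ℕ) :
    κ t = sSup ({0} ∪ feasibleGains c O (r t) (x t) (prevRef v₀ v t)) :=
  h.2.1 t

theorem ref_eq (h : IsRGDCTrajectory A b c O r x₀ v₀ x v κ) (t : ℕ) :
    v t = prevRef v₀ v t + κ t * (r t - prevRef v₀ v t) :=
  h.2.2.1 t

theorem smul {xa : ℕ → Fin n → ℝ} {va κa : ℕ → ℝ} (hO : IsHomogeneousFamily O)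
    (hr : ∀ t, r t ≠ 0) {α : ℝ} (hα : 0 < α) (h : IsRGDCTrajectory A b c O r x₀ v₀ x v κ)
    (ha : IsRGDCTrajectory A b c O (fun t => α * r t) (α • x₀) (α * v₀) xa va κa) (t : ℕ) :
    xa t = α • x t ∧ va t = α * v t ∧ κa t = κ t := by
  have step : ∀ t, xa t = α • x t → prevRef (α * v₀) va t = α * prevRef v₀ v t →
      va t = α * v t ∧ κa t = κ t := by
    intro t hx hw
    have hκ : κa t = κ t := by
      rw [ha.gain_eq, h.gain_eq, hx, hw, feasibleGains_smul hO hα (hr t)]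
    refine ⟨?_, hκ⟩
    rw [ha.ref_eq, h.ref_eq, hw, hκ]
    ring
  have hstate : ∀ t, xa t = α • x t ∧ prevRef (α * v₀) va t = α * prevRef v₀ v t := by
    intro t
    induction t with
    | zero => exact ⟨by rw [ha.state_zero, h.state_zero], by rw [prevRef_zero, prevRef_zero]⟩
    | succ t ih =>
      have hv := (step t ih.1 ih.2).1
      refine ⟨?_, by rw [prevRef_succ, prevRef_succ, hv]⟩
      rw [ha.state_succ, h.state_succ, ih.1, hv, mulVec_smul, smul_add, smul_smul]
  obtain ⟨hx, hw⟩ := hstate t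
  exact ⟨hx, step t hx hw⟩

end IsRGDCTrajectory

/-- Theorem 2 of the paper (homogeneity of the RG-DC governed closed-loop system):
if `O` is the dynamic maximal admissible set of Table I, then scaling the reference and
the initial conditions by `α > 0` scales the governed state and governed reference by `α`
while leaving `κ` unchanged; in particular the governed tracking output satisfies
`y_tr(t, αr, α(x₀,v₀)) = α · y_tr(t, r, (x₀,v₀))`. -/
theorem stmt_15 {n m : ℕ} (A : Matrix (Fin n) (Fin n) ℝ) (b c : Fin n → ℝ)
    (Hxm Hxp : (Fin n → ℝ) →ₗ[ℝ] (Fin m → ℝ))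
    (Hvm Hvp : ℝ →ₗ[ℝ] (Fin m → ℝ))
    (hminus hplus : Fin m → ℝ)
    (O : ℝ → ℝ → Set ((Fin n → ℝ) × ℝ))
    (hO : ∀ ρ y : ℝ, ρ ≠ 0 → O ρ y =
      if 0 < ρ then
        (if y ≤ ρ then {xv : (Fin n → ℝ) × ℝ | Hxm xv.1 + Hvm xv.2 ≤ ρ • hminus}
         else {xv : (Fin n → ℝ) × ℝ | ρ • hplus ≤ Hxp xv.1 + Hvp xv.2})
      else
        (if y ≤ ρ then {xv : (Fin n → ℝ) × ℝ | Hxp xv.1 + Hvp xv.2 ≤ ρ • hplus}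
         else {xv : (Fin n → ℝ) × ℝ | ρ • hminus ≤ Hxm xv.1 + Hvm xv.2}))
    (r : ℕ → ℝ) (hr : ∀ t, r t ≠ 0)
    (x₀ : Fin n → ℝ) (v₀ : ℝ) (α : ℝ) (hα : 0 < α)
    (x xa : ℕ → Fin n → ℝ) (v va : ℕ → ℝ) (κ κa : ℕ → ℝ)
    (htraj : IsRGDCTrajectory A b c O r x₀ v₀ x v κ)
    (htraja : IsRGDCTrajectory A b c O (fun t => α * r t) (α • x₀) (α * v₀) xa va κa) :
    ∀ t : ℕ, xa t = α • x t ∧ va t = α * v t ∧ κa t = κ t ∧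
      c ⬝ᵥ xa t = α * (c ⬝ᵥ x t) := by
  intro t
  obtain ⟨hx, hv, hκ⟩ := htraj.smul (isHomogeneousFamily_tableI hO) hr hα htraja t
  exact ⟨hx, hv, hκ, by rw [hx, dotProduct_smul, smul_eq_mul]⟩
end
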